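/- arXiv:2410.06150 — 2 statements merged into one kernel-verified Lean document; each statement's English description precedes it below -/
import Mathlib

section
/- Let e : [a, b] → ℝ be a continuous function such that for every probability density g on [a, b] (with respect to Lebesgue measure, strictly positive) and every f ∈ [a, b), the equality e( (∫_{f}^{b} z·g(z) dz)/(∫_{f}^{b} g(z) dz) ) · ∫_{f}^{b} g(z) dz = ∫_{f}^{b} e(z)·g(z) dz holds. Then e is affine on [a, b]. -/
/-!
Both sides of the hypothesis are homogeneous in `g`, so the normalisation of `g` is irrelevant.
For `m = (f + b) / 2` the tilted density `1 + κ (z - m)` is positive on `[a, b]` when `κ` is small;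
on `[f, b]` it has mass `b - f`, mean `m + κ (b - f)² / 12`, and `∫ e g` is affine in `κ`. Hence
`e` is affine near every midpoint `m`, so affine on `((a + b) / 2, b)`, say equal to `ℓ` there.
The uniform density gives `∫_f^b e = (b - f) e m = ∫_f^b ℓ` for every `f ∈ (a, b)`, and
differentiating in `f` yields `e = ℓ` on all of `[a, b]`.
-/

open Set Filter Topology MeasureTheory

theorem integral_quadratic (f b p q r : ℝ) :
    ∫ z in f..b, (p * z ^ 2 + q * z + r) =
      p * (b ^ 3 - f ^ 3) / 3 + q * (b ^ 2 - f ^ 2) / 2 + r * (b - f) := by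
  rw [intervalIntegral.integral_add (by apply Continuous.intervalIntegrable; fun_prop)
      intervalIntegrable_const,
    intervalIntegral.integral_add (by apply Continuous.intervalIntegrable; fun_prop)
      (by apply Continuous.intervalIntegrable; fun_prop),
    intervalIntegral.integral_const_mul, intervalIntegral.integral_const_mul, integral_pow,
    integral_id, intervalIntegral.integral_const, smul_eq_mul]
  ring

theorem eqOn_Icc_of_forall_integral_eq {a b : ℝ} (hab : a < b) {u v : ℝ → ℝ}
    (hu : ContinuousOn u (Icc a b)) (hv : ContinuousOn v (Icc a b))
    (h : ∀ f ∈ Ioo a b, ∫ x in f..b, u x = ∫ x in f..b, v x) : EqOn u v (Icc a b) := by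
  have hderiv : ∀ w : ℝ → ℝ, ContinuousOn w (Icc a b) → ∀ f ∈ Ioo a b,
      HasDerivAt (fun t => ∫ x in t..b, w x) (-w f) f := fun w hw f hf =>
    intervalIntegral.integral_hasDerivAt_left
      ((hw.mono (uIcc_of_le hf.2.le ▸ Icc_subset_Icc_left hf.1.le)).intervalIntegrable)
      ((hw.mono Ioo_subset_Icc_self).stronglyMeasurableAtFilter isOpen_Ioo f hf)
      (hw.continuousAt (Icc_mem_nhds hf.1 hf.2))
  refine EqOn.of_subset_closure (fun f hf => ?_) hu hv Ioo_subset_Icc_self (closure_Ioo hab.ne).ge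
  have heq : (fun t => ∫ x in t..b, u x) =ᶠ[𝓝 f] fun t => ∫ x in t..b, v x :=
    eventually_of_mem (Ioo_mem_nhds hf.1 hf.2) h
  exact neg_inj.1 ((hderiv u hu f hf).unique ((hderiv v hv f hf).congr_of_eventuallyEq heq))

theorem IsOpen.exists_affine_of_locally_affine {𝕜 : Type*} [RCLike 𝕜] {s : Set 𝕜}
    (hs : IsOpen s) (hs' : IsPreconnected s) {e : 𝕜 → 𝕜}
    (h : ∀ x ∈ s, ∃ c₁ c₂ : 𝕜, ∀ᶠ y in 𝓝 x, e y = c₁ * y + c₂) :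
    ∃ c₁ c₂ : 𝕜, ∀ x ∈ s, e x = c₁ * x + c₂ := by
  have hslope : ∀ x ∈ s, DifferentiableAt 𝕜 e x ∧ ∃ c₁ : 𝕜, deriv e =ᶠ[𝓝 x] fun _ => c₁ := by
    intro x hx
    obtain ⟨c₁, c₂, hloc⟩ := h x hx
    have hline : ∀ y, HasDerivAt (fun y => c₁ * y + c₂) c₁ y := fun y => by
      simpa using ((hasDerivAt_id y).const_mul c₁).add_const c₂
    refine ⟨((hline x).congr_of_eventuallyEq hloc).differentiableAt, c₁, ?_⟩
    exact hloc.eventually_nhds.mono fun y hy => ((hline y).congr_of_eventuallyEq hy).deriv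
  obtain ⟨c₁, hc₁⟩ : ∃ c₁, ∀ x ∈ s, deriv e x = c₁ := by
    refine hs.exists_is_const_of_deriv_eq_zero hs' (fun x hx => ?_) fun x hx => ?_
    · obtain ⟨c, hc⟩ := (hslope x hx).2
      exact ((hasDerivAt_const x c).congr_of_eventuallyEq hc).differentiableAt
        |>.differentiableWithinAt
    · obtain ⟨c, hc⟩ := (hslope x hx).2
      exact hc.deriv_eq.trans (deriv_const x c)
  obtain ⟨c₂, hc₂⟩ := hs.exists_eq_add_of_deriv_eq hs'
    (fun x hx => (hslope x hx).1.differentiableWithinAt) (differentiableOn_id.const_mul c₁) fun x hx => by simp [hc₁ x hx]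
  exact ⟨c₁, c₂, hc₂⟩

def TailMeanCommutes (e g : ℝ → ℝ) (f b : ℝ) : Prop :=
  e ((∫ z in f..b, z * g z) / ∫ z in f..b, g z) * (∫ z in f..b, g z) = ∫ z in f..b, e z * g z

theorem TailMeanCommutes.const_mul {e g : ℝ → ℝ} {f b : ℝ} (h : TailMeanCommutes e g f b)
    (c : ℝ) : TailMeanCommutes e (fun z => c * g z) f b := by
  unfold TailMeanCommutes at h ⊢
  simp only [mul_left_comm _ c, intervalIntegral.integral_const_mul]
  rcases eq_or_ne c 0 with rfl | hc
  · simp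
  · rw [mul_div_mul_left _ _ hc, ← h, mul_left_comm]

theorem tailMeanCommutes_of_normalized {a b : ℝ} (hab : a < b) {e : ℝ → ℝ}
    (h : ∀ g : ℝ → ℝ, Continuous g → (∀ x ∈ Icc a b, 0 < g x) → (∫ x in a..b, g x) = 1 →
      ∀ f ∈ Ico a b, TailMeanCommutes e g f b)
    {g : ℝ → ℝ} (hg : Continuous g) (hpos : ∀ x ∈ Icc a b, 0 < g x) {f : ℝ} (hf : f ∈ Ico a b) :
    TailMeanCommutes e g f b := by
  have hmass : 0 < ∫ x in a..b, g x :=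
    intervalIntegral.intervalIntegral_pos_of_pos_on (hg.intervalIntegrable a b)
      (fun x hx => hpos x (Ioo_subset_Icc_self hx)) hab
  have hnorm := h (fun z => (∫ x in a..b, g x)⁻¹ * g z) (continuous_const.mul hg)
    (fun x hx => mul_pos (inv_pos.2 hmass) (hpos x hx))
    (by rw [intervalIntegral.integral_const_mul, inv_mul_cancel₀ hmass.ne']) f hf
  simpa [← mul_assoc, mul_inv_cancel₀ hmass.ne'] using hnorm.const_mul (∫ x in a..b, g x)

section Tilt

variable {e : ℝ → ℝ} {f b κ : ℝ}

theorem TailMeanCommutes.apply_midpoint (hcomm : TailMeanCommutes e (fun _ => 1) f b)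
    (hfb : f < b) : (b - f) * e ((f + b) / 2) = ∫ z in f..b, e z := by
  unfold TailMeanCommutes at hcomm
  simp only [mul_one, intervalIntegral.integral_const, smul_eq_mul, integral_id] at hcomm
  rw [← hcomm, show (b ^ 2 - f ^ 2) / 2 / (b - f) = (f + b) / 2 by
    field_simp [sub_ne_zero.2 hfb.ne']; ring]
  ring

theorem integral_tilt :
    ∫ z in f..b, (1 + κ * (z - (f + b) / 2)) = b - f := calc
  _ = ∫ z in f..b, (0 * z ^ 2 + κ * z + (1 - κ * (f + b) / 2)) := by congr 1; ext z; ring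
  _ = b - f := by rw [integral_quadratic]; ring

theorem integral_id_mul_tilt :
    ∫ z in f..b, z * (1 + κ * (z - (f + b) / 2)) =
      (b - f) * ((f + b) / 2 + κ * (b - f) ^ 2 / 12) := calc
  _ = ∫ z in f..b, (κ * z ^ 2 + (1 - κ * (f + b) / 2) * z + 0) := by congr 1; ext z; ring
  _ = _ := by rw [integral_quadratic]; ring

theorem integral_mul_tilt (he : IntervalIntegrable e volume f b) :
    ∫ z in f..b, e z * (1 + κ * (z - (f + b) / 2)) =
      (∫ z in f..b, e z) + κ * ∫ z in f..b, (z - (f + b) / 2) * e z := by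
  have hexpand : (fun z => e z * (1 + κ * (z - (f + b) / 2))) =
      fun z => e z + κ * ((z - (f + b) / 2) * e z) := by
    ext z; ring
  rw [hexpand, intervalIntegral.integral_add he ((he.continuousOn_mul (by fun_prop)).const_mul κ),
    intervalIntegral.integral_const_mul]

theorem TailMeanCommutes.apply_tilted_mean
    (hcomm : TailMeanCommutes e (fun z => 1 + κ * (z - (f + b) / 2)) f b)
    (he : IntervalIntegrable e volume f b) (hfb : f < b) :
    e ((f + b) / 2 + κ * (b - f) ^ 2 / 12) =
      ((∫ z in f..b, e z) + κ * ∫ z in f..b, (z - (f + b) / 2) * e z) / (b - f) := by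
  have hr : b - f ≠ 0 := sub_ne_zero.2 hfb.ne'
  unfold TailMeanCommutes at hcomm
  rw [integral_tilt, integral_id_mul_tilt, integral_mul_tilt he, mul_div_cancel_left₀ _ hr] at hcomm
  rw [← hcomm, mul_div_cancel_right₀ _ hr]

end Tilt

theorem eventually_affine_near_midpoint {a b f : ℝ} {e : ℝ → ℝ} (he : ContinuousOn e (Icc a b))
    (hcomm : ∀ g : ℝ → ℝ, Continuous g → (∀ x ∈ Icc a b, 0 < g x) → TailMeanCommutes e g f b)
    (hf : f ∈ Ico a b) :
    ∃ c₁ c₂ : ℝ, ∀ᶠ y in 𝓝 ((f + b) / 2), e y = c₁ * y + c₂ := by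
  set m := (f + b) / 2 with hm
  set r := b - f
  have hr : 0 < r := sub_pos.2 hf.2
  have hba : 0 < b - a := by linarith [hf.1, hf.2]
  have hint : IntervalIntegrable e volume f b :=
    (he.mono (uIcc_of_le hf.2.le ▸ Icc_subset_Icc_left hf.1)).intervalIntegrable
  set δ := r ^ 2 / (12 * (b - a))
  have hδ : 0 < δ := by positivity
  set G := ∫ z in f..b, e z
  set A := ∫ z in f..b, (z - m) * e z
  refine ⟨12 * A / r ^ 3, G / r - 12 * A / r ^ 3 * m, ?_⟩
  filter_upwards [Ioo_mem_nhds (sub_lt_self m hδ) (lt_add_of_pos_right m hδ)] with y hy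
  set κ := 12 * (y - m) / r ^ 2
  have hκ : |κ| * (b - a) < 1 := by
    have hym : |y - m| < δ := abs_sub_lt_iff.2 ⟨by linarith [hy.2], by linarith [hy.1]⟩
    rw [abs_div, abs_mul, abs_of_pos (by norm_num : (0 : ℝ) < 12), abs_of_pos (pow_pos hr 2),
      div_mul_eq_mul_div, div_lt_one (by positivity)]
    calc 12 * |y - m| * (b - a) < 12 * δ * (b - a) := by gcongr
      _ = r ^ 2 := by simp only [δ]; field_simp
  have htilt_pos : ∀ x ∈ Icc a b, 0 < 1 + κ * (x - m) := by
    intro x hx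
    have hxm : |x - m| ≤ b - a :=
      abs_sub_le_iff.2 ⟨by linarith [hx.2, hf.1, hf.2], by linarith [hx.1, hf.2]⟩
    have : |κ * (x - m)| < 1 := by
      rw [abs_mul]
      exact (mul_le_mul_of_nonneg_left hxm (abs_nonneg κ)).trans_lt hκ
    linarith [neg_abs_le (κ * (x - m))]
  have hy' : y = m + κ * r ^ 2 / 12 := by
    simp only [κ]; field_simp; ring
  have htilted : e (m + κ * r ^ 2 / 12) = (G + κ * A) / r :=
    (hcomm _ (by fun_prop) htilt_pos).apply_tilted_mean hint hf.2
  rw [hy', htilted]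
  simp only [κ]
  field_simp
  ring

theorem stmt1 (a b : ℝ) (hab : a < b) (e : ℝ → ℝ)
    (he : ContinuousOn e (Set.Icc a b))
    (h : ∀ g : ℝ → ℝ, Continuous g → (∀ x ∈ Set.Icc a b, 0 < g x) →
      (∫ x in a..b, g x) = 1 →
      ∀ f ∈ Set.Ico a b,
        e ((∫ z in f..b, z * g z) / (∫ z in f..b, g z)) * (∫ z in f..b, g z)
          = ∫ z in f..b, e z * g z) :
    ∃ c₁ c₂ : ℝ, ∀ x ∈ Set.Icc a b, e x = c₁ * x + c₂ := by
  have hcomm : ∀ f ∈ Ico a b, ∀ g : ℝ → ℝ, Continuous g → (∀ x ∈ Icc a b, 0 < g x) →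
      TailMeanCommutes e g f b := fun f hf g hg hpos =>
    tailMeanCommutes_of_normalized hab h hg hpos hf
  obtain ⟨c₁, c₂, hupper⟩ : ∃ c₁ c₂ : ℝ, ∀ x ∈ Ioo ((a + b) / 2) b, e x = c₁ * x + c₂ := by
    refine isOpen_Ioo.exists_affine_of_locally_affine isPreconnected_Ioo fun x hx => ?_
    have hf : 2 * x - b ∈ Ico a b := ⟨by linarith [hx.1], by linarith [hx.2]⟩
    simpa [show (2 * x - b + b) / 2 = x by ring] using
      eventually_affine_near_midpoint he (hcomm _ hf) hf
  refine ⟨c₁, c₂, fun x hx => eqOn_Icc_of_forall_integral_eq hab he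
    (v := fun x => c₁ * x + c₂) (by fun_prop) (fun f hf => ?_) hx⟩
  have hmid : (f + b) / 2 ∈ Ioo ((a + b) / 2) b := ⟨by linarith [hf.1], by linarith [hf.2]⟩
  calc ∫ x in f..b, e x = (b - f) * e ((f + b) / 2) :=
        ((hcomm f ⟨hf.1.le, hf.2⟩ _ continuous_const fun _ _ => one_pos).apply_midpoint hf.2).symm
    _ = ∫ x in f..b, (0 * x ^ 2 + c₁ * x + c₂) := by rw [hupper _ hmid, integral_quadratic]; ring
    _ = ∫ x in f..b, (c₁ * x + c₂) := by simp
end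

section
/- Let C be an (n+2) × (n+2) real matrix such that for each column j ≤ n+1, all entries strictly below the diagonal in column j equal aⱼ, the diagonal entry is bⱼ, and aⱼ ≠ bⱼ. Then rank(C) ≥ n+1. -/
/-!
Subtracting row `j + 1` from row `j` cancels the common value `a k` in every column `k < j`, and
leaves `b j - a j ≠ 0` in column `j`. So the first `n + 1` columns of the `n + 1` successive row
differences form an upper triangular matrix with nonzero diagonal, of full rank `n + 1`.
-/

namespace Matrix

theorem rank_of_isUpperTriangular {m R : Type*} [Fintype m] [LinearOrder m] [CommRing R]
    [IsDomain R] {A : Matrix m m R} (hA : A.IsUpperTriangular) (hd : ∀ i, A i i ≠ 0) :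
    A.rank = Fintype.card m := by
  classical
  simpa using rank_mul_eq_right_of_isUpperTriangular A (1 : Matrix m m R) hA hd

def rowDiff {n R : Type*} [Sub R] {k : ℕ} (C : Matrix (Fin (k + 1)) n R) :
    Matrix (Fin k) n R :=
  of fun j => C j.castSucc - C j.succ

@[simp]
theorem rowDiff_apply {n R : Type*} [Sub R] {k : ℕ} (C : Matrix (Fin (k + 1)) n R)
    (j : Fin k) (l : n) : C.rowDiff j l = C j.castSucc l - C j.succ l :=
  rfl

theorem rank_rowDiff_le {n R : Type*} [Fintype n] [CommRing R] [StrongRankCondition R] {k : ℕ}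
    (C : Matrix (Fin (k + 1)) n R) : C.rowDiff.rank ≤ C.rank := by
  have : C.rowDiff = (of fun j => Pi.single j.castSucc 1 - Pi.single j.succ 1 :
      Matrix (Fin k) (Fin (k + 1)) R) * C := by
    ext j l
    simp [mul_apply, sub_mul, Finset.sum_sub_distrib, Pi.single_apply]
  exact this ▸ rank_mul_le_right _ _

end Matrix

theorem stmt14 (n : ℕ) (C : Matrix (Fin (n + 2)) (Fin (n + 2)) ℝ)
    (a b : Fin (n + 2) → ℝ)
    (hlow : ∀ i j : Fin (n + 2), (j : ℕ) < n + 1 → j < i → C i j = a j)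
    (hdiag : ∀ j : Fin (n + 2), (j : ℕ) < n + 1 → C j j = b j)
    (hne : ∀ j : Fin (n + 2), (j : ℕ) < n + 1 → a j ≠ b j) :
    n + 1 ≤ C.rank := by
  set D := C.rowDiff.submatrix id Fin.castSucc
  have hcol (j : Fin (n + 1)) : ((j.castSucc : Fin (n + 2)) : ℕ) < n + 1 := j.isLt
  have hupper : D.IsUpperTriangular := by
    intro j k (hkj : k < j)
    simp only [D, Matrix.submatrix_apply, id_eq, Matrix.rowDiff_apply]
    rw [hlow _ _ (hcol k) (Fin.castSucc_lt_castSucc_iff.2 hkj),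
      hlow _ _ (hcol k) ((Fin.castSucc_lt_castSucc_iff.2 hkj).trans Fin.castSucc_lt_succ),
      sub_self]
  have hdiagD (j : Fin (n + 1)) : D j j ≠ 0 := by
    simp only [D, Matrix.submatrix_apply, id_eq, Matrix.rowDiff_apply]
    rw [hdiag _ (hcol j), hlow _ _ (hcol j) Fin.castSucc_lt_succ]
    exact sub_ne_zero.2 (hne _ (hcol j)).symm
  calc n + 1 = D.rank := by
        rw [Matrix.rank_of_isUpperTriangular hupper hdiagD, Fintype.card_fin]
    _ ≤ C.rowDiff.rank := Matrix.rank_submatrix_le _ _ _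
    _ ≤ C.rank := Matrix.rank_rowDiff_le C
end
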